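/- arXiv:2506.20412 — 4 statements merged into one kernel-verified Lean document; each statement's English description precedes it below -/
import Mathlib

section
/- Let a ∈ [0,1), b ≥ 1, and x₁,…,x_n ∈ [0,a] with Σᵢ xᵢ = b. Then ∏ᵢ (1 − xᵢ) ≥ (1 − a)^⌈b/a⌉. -/
/-- If `a ∈ (0,1)`, `b ≥ 1` and `x₁,…,x_n ∈ [0,a]` with `∑ xᵢ = b`,
then `∏ (1 - xᵢ) ≥ (1 - a) ^ ⌈b / a⌉`. -/
theorem stmt2 (n : ℕ) (hn : 0 < n) (a b : ℝ) (ha0 : 0 < a) (ha1 : a < 1) (hb : 1 ≤ b)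
    (x : Fin n → ℝ) (hx0 : ∀ i, 0 ≤ x i) (hxa : ∀ i, x i ≤ a)
    (hsum : ∑ i, x i = b) :
    (1 - a) ^ ⌈b / a⌉₊ ≤ ∏ i, (1 - x i) := by
  set c := 1 - a with hc
  have hc0 : 0 < c := by simp [hc]; linarith
  have hc1 : c ≤ 1 := by simp [hc]; linarith
  -- key: c ^ (x i / a) ≤ 1 - x i
  have key : ∀ i, c ^ (x i / a) ≤ 1 - x i := by
    intro i
    have hs0 : 0 ≤ x i / a := div_nonneg (hx0 i) ha0.le
    have hs1 : x i / a ≤ 1 := (div_le_one ha0).2 (hxa i)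
    have h := Real.geom_mean_le_arith_mean2_weighted
      (by linarith : (0:ℝ) ≤ 1 - x i / a) hs0 zero_le_one hc0.le (by ring)
    rw [Real.one_rpow, one_mul, mul_one] at h
    have : (1 - x i / a) + x i / a * c = 1 - x i := by
      field_simp [hc]
      ring
    linarith [h, this.le, this.ge]
  calc (1 - a) ^ ⌈b / a⌉₊ = c ^ ((⌈b / a⌉₊ : ℝ)) := by
        rw [← Real.rpow_natCast]
      _ ≤ c ^ (b / a) := by
        apply Real.rpow_le_rpow_of_exponent_ge hc0 hc1
        exact Nat.le_ceil _
      _ = ∏ i, c ^ (x i / a) := by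
        rw [← Real.rpow_sum_of_pos hc0]
        rw [← Finset.sum_div, hsum]
      _ ≤ ∏ i, (1 - x i) := by
        apply Finset.prod_le_prod
        · intro i _; positivity
        · intro i _; exact key i
end

section
/- Every weighted graph H on n vertices with total edge weight at least κ(n−1) contains a κ-strong component, i.e., a vertex subset S such that the minimum cut of the induced subgraph H[S] is at least κ. -/
/-- Every weighted graph on `n ≥ 2` vertices (weight function `w` symmetric,
nonnegative, zero on the diagonal) with total edge weight at least `κ(n-1)` contains a
κ-strong component: a vertex set `S` with at least two vertices such that every cut of
the induced subgraph on `S` (i.e. every nonempty proper `T ⊆ S`) has crossing weight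
at least `κ`. -/
theorem stmt3 {V : Type*} [Fintype V] [DecidableEq V] (hn : 2 ≤ Fintype.card V)
    (w : V → V → ℝ) (hsym : ∀ u v, w u v = w v u) (hnn : ∀ u v, 0 ≤ w u v)
    (hdiag : ∀ v, w v v = 0) (κ : ℝ) (hκ : 0 < κ)
    (htot : κ * (Fintype.card V - 1) ≤ (∑ u, ∑ v, w u v) / 2) :
    ∃ S : Finset V, 2 ≤ S.card ∧
      ∀ T ⊆ S, T.Nonempty → T ≠ S → κ ≤ ∑ u ∈ T, ∑ v ∈ S \ T, w u v := by
  suffices h : ∀ n (S : Finset V), S.card ≤ n → 2 ≤ S.card →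
      2 * (κ * (S.card - 1)) ≤ ∑ u ∈ S, ∑ v ∈ S, w u v →
      ∃ S', S' ⊆ S ∧ 2 ≤ S'.card ∧
        ∀ T ⊆ S', T.Nonempty → T ≠ S' → κ ≤ ∑ u ∈ T, ∑ v ∈ S' \ T, w u v by
    obtain ⟨S', _, h2, h3⟩ := h (Fintype.card V) Finset.univ le_rfl
      (by simpa using hn) (by rw [Finset.card_univ]; linarith)
    exact ⟨S', h2, h3⟩
  intro n
  induction n with
  | zero => intro S hle h2 _; omega
  | succ n ih =>
    intro S hle h2 hw
    by_cases hgood : ∀ T ⊆ S, T.Nonempty → T ≠ S → κ ≤ ∑ u ∈ T, ∑ v ∈ S \ T, w u v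
    · exact ⟨S, subset_rfl, h2, hgood⟩
    push_neg at hgood
    obtain ⟨T, hTS, hTne, hTprop, hcut⟩ := hgood
    have hBne : (S \ T).Nonempty := by
      rw [Finset.sdiff_nonempty]
      intro hST
      exact hTprop (Finset.Subset.antisymm hTS hST)
    have hcard : (S \ T).card + T.card = S.card := Finset.card_sdiff_add_card_eq_card hTS
    have hAc : 1 ≤ T.card := Finset.card_pos.mpr hTne
    have hBc : 1 ≤ (S \ T).card := Finset.card_pos.mpr hBne
    have hcardR : ((S \ T).card : ℝ) + (T.card : ℝ) = (S.card : ℝ) := by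
      exact_mod_cast congrArg (Nat.cast : ℕ → ℝ) hcard
    have hsplit : ∀ f : V → ℝ, ∑ u ∈ S, f u = ∑ u ∈ T, f u + ∑ u ∈ S \ T, f u := by
      intro f
      rw [← Finset.sum_sdiff hTS]; ring
    have hswap : ∑ u ∈ S \ T, ∑ v ∈ T, w u v = ∑ u ∈ T, ∑ v ∈ S \ T, w u v := by
      rw [Finset.sum_comm]
      exact Finset.sum_congr rfl fun u _ => Finset.sum_congr rfl fun v _ => hsym _ _
    have hdecomp : ∑ u ∈ S, ∑ v ∈ S, w u v
        = (∑ u ∈ T, ∑ v ∈ T, w u v) + (∑ u ∈ S \ T, ∑ v ∈ S \ T, w u v)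
          + 2 * ∑ u ∈ T, ∑ v ∈ S \ T, w u v := by
      have h1 : ∀ u, ∑ v ∈ S, w u v = ∑ v ∈ T, w u v + ∑ v ∈ S \ T, w u v :=
        fun u => hsplit _
      rw [hsplit (fun u => ∑ v ∈ S, w u v)]
      simp only [h1]
      rw [Finset.sum_add_distrib, Finset.sum_add_distrib, hswap]
      ring
    have hFAnn : 0 ≤ ∑ u ∈ T, ∑ v ∈ T, w u v :=
      Finset.sum_nonneg fun u _ => Finset.sum_nonneg fun v _ => hnn u v
    have hFBnn : 0 ≤ ∑ u ∈ S \ T, ∑ v ∈ S \ T, w u v :=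
      Finset.sum_nonneg fun u _ => Finset.sum_nonneg fun v _ => hnn u v
    have hsing : ∀ (U : Finset V), U.card = 1 → ∑ u ∈ U, ∑ v ∈ U, w u v = 0 := by
      intro U hU
      obtain ⟨x, rfl⟩ := Finset.card_eq_one.mp hU
      simp [hdiag]
    -- key inequality
    have hkey : 2 * (κ * ((T.card : ℝ) - 1)) + 2 * (κ * (((S \ T).card : ℝ) - 1))
        ≤ (∑ u ∈ T, ∑ v ∈ T, w u v) + (∑ u ∈ S \ T, ∑ v ∈ S \ T, w u v) := by
      nlinarith [hw, hdecomp, hcut, hcardR, hκ]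
    -- IH applicable to each side
    have hAle : T.card ≤ n := by omega
    have hBle : (S \ T).card ≤ n := by omega
    rcases Nat.lt_or_ge T.card 2 with hA1 | hA2
    · -- T is a singleton
      have hA1' : T.card = 1 := by omega
      have hFA : ∑ u ∈ T, ∑ v ∈ T, w u v = 0 := hsing T hA1'
      rcases Nat.lt_or_ge (S \ T).card 2 with hB1 | hB2
      · -- both singletons : contradiction
        have hB1' : (S \ T).card = 1 := by omega
        have hFB : ∑ u ∈ S \ T, ∑ v ∈ S \ T, w u v = 0 := hsing _ hB1'
        have : (S.card : ℝ) = 2 := by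
          rw [← hcardR, hA1', hB1']; norm_num
        nlinarith [hw, hdecomp, hcut]
      · have hBw : 2 * (κ * (((S \ T).card : ℝ) - 1))
            ≤ ∑ u ∈ S \ T, ∑ v ∈ S \ T, w u v := by
          rw [hA1'] at hkey
          push_cast at hkey
          linarith
        obtain ⟨S', hS'B, h2', h3'⟩ := ih (S \ T) hBle hB2 hBw
        exact ⟨S', hS'B.trans (Finset.sdiff_subset), h2', h3'⟩
    · rcases Nat.lt_or_ge (S \ T).card 2 with hB1 | hB2
      · have hB1' : (S \ T).card = 1 := by omega
        have hFB : ∑ u ∈ S \ T, ∑ v ∈ S \ T, w u v = 0 := hsing _ hB1'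
        have hAw : 2 * (κ * ((T.card : ℝ) - 1)) ≤ ∑ u ∈ T, ∑ v ∈ T, w u v := by
          rw [hB1'] at hkey
          push_cast at hkey
          linarith
        obtain ⟨S', hS'A, h2', h3'⟩ := ih T hAle hA2 hAw
        exact ⟨S', hS'A.trans hTS, h2', h3'⟩
      · -- both have ≥ 2 vertices: one satisfies its weight bound
        by_cases hAw : 2 * (κ * ((T.card : ℝ) - 1)) ≤ ∑ u ∈ T, ∑ v ∈ T, w u v
        · obtain ⟨S', hS'A, h2', h3'⟩ := ih T hAle hA2 hAw
          exact ⟨S', hS'A.trans hTS, h2', h3'⟩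
        · have hBw : 2 * (κ * (((S \ T).card : ℝ) - 1))
              ≤ ∑ u ∈ S \ T, ∑ v ∈ S \ T, w u v := by
            push_neg at hAw
            linarith
          obtain ⟨S', hS'B, h2', h3'⟩ := ih (S \ T) hBle hB2 hBw
          exact ⟨S', hS'B.trans (Finset.sdiff_subset), h2', h3'⟩
end

section
/- Let A be an a×b monotone matrix (column minimizer rows are monotone nondecreasing across columns). Fix a column j and let i* be a row achieving the minimum of column j. Then the global minimum of A equals the minimum of: the minimum of column j, the minimum of the submatrix A[1..i*, 1..j−1], and the minimum of the submatrix A[i*..a, j+1..b]. -/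
/-- Let `A` be an `a × b` monotone matrix: for each column `c`, `colmin c`
is the column minimum, `js c` / `jt c` are the first / last minimizing rows, and
`c < c'` implies `jt c ≤ js c'`. Fix a column `j` and let `i* = js j` be a row achieving
the minimum of column `j`. Then the global minimum of `A` equals the minimum over the
region consisting of column `j`, the submatrix of rows `≤ i*` and columns `< j`, and the
submatrix of rows `≥ i*` and columns `> j`: every entry of `A` is bounded below by some
entry of this region. -/
theorem stmt12 (a b : ℕ) (ha : 0 < a) (hb : 0 < b) (A : Fin a → Fin b → ℝ)
    (colmin : Fin b → ℝ)
    (hlb : ∀ c i, colmin c ≤ A i c)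
    (js jt : Fin b → Fin a)
    (hjs : ∀ c, A (js c) c = colmin c ∧ ∀ i, A i c = colmin c → js c ≤ i)
    (hjt : ∀ c, A (jt c) c = colmin c ∧ ∀ i, A i c = colmin c → i ≤ jt c)
    (hmono : ∀ c c' : Fin b, c < c' → jt c ≤ js c')
    (j : Fin b) :
    ∀ i : Fin a, ∀ c : Fin b, ∃ i' : Fin a, ∃ c' : Fin b,
      (c' = j ∨ (i' ≤ js j ∧ c' < j) ∨ (js j ≤ i' ∧ j < c')) ∧ A i' c' ≤ A i c := by
  intro i c
  rcases lt_trichotomy c j with h | h | h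
  · exact ⟨js c, c, Or.inr (Or.inl ⟨le_trans ((hjt c).2 (js c) (hjs c).1) (hmono c j h), h⟩),
      (hjs c).1 ▸ hlb c i⟩
  · exact ⟨js j, j, Or.inl rfl, le_trans (le_of_eq (hjs j).1) (h ▸ hlb j i)⟩
  · exact ⟨js c, c, Or.inr (Or.inr ⟨le_trans ((hjt j).2 (js j) (hjs j).1) (hmono j c h), h⟩),
      (hjs c).1 ▸ hlb c i⟩
end

section
/- Let T₁,…,T_k be a maximal k-packing of forests of a graph G, with k ≥ λ(G), where λ(G) is the (unweighted) minimum cut value. Then the subgraph H = (V, ∪ᵢ Tᵢ) satisfies λ(H) = λ(G); moreover, every minimum cut C of G satisfies C ⊆ ∪ᵢ Tᵢ. -/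
/-!
An edge `e` of `G` crossing a cut `S` and used by no forest can be added to any forest that has
no edge crossing `S`, since its endpoints lie in different components of that forest. Maximality
therefore forces every forest to cross `S`, and edge-disjointness gives at least `k` edges of
`H = ⨆ i, Tᵢ` across `S`. Hence a cut of `G` with at most `k` edges lies entirely in `H`, and any
other cut of `H` is either a full cut of `G` or has at least `k ≥ λ(G)` edges.
-/

def crossingEdges {V : Type*} (G : SimpleGraph V) (S : Set V) : Set (Sym2 V) :=
  {e | e ∈ G.edgeSet ∧ ∃ x ∈ S, ∃ y ∉ S, e = s(x, y)}

noncomputable def cutCount {V : Type*} (G : SimpleGraph V) (S : Set V) : ℕ :=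
  (crossingEdges G S).ncard

theorem exists_eq_empty_of_ncard_lt_card {ι α : Type*} [Fintype ι] {s : ι → Set α}
    {A : Set α} (hA : A.Finite) (hdisj : Pairwise (Function.onFun Disjoint s)) (hsub : ∀ i, s i ⊆ A)
    (hcard : A.ncard < Fintype.card ι) : ∃ i, s i = ∅ := by
  by_contra! hne
  choose f hf using hne
  have hinj : Function.Injective f := fun i j hij => by
    by_contra hij'
    exact Set.disjoint_left.1 (hdisj hij') (hf i) (hij ▸ hf j)
  have hrange : Set.range f ⊆ A := Set.range_subset_iff.2 fun i => hsub i (hf i)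
  have := Set.ncard_le_ncard hrange hA
  rw [Set.ncard_range_of_injective hinj, Nat.card_eq_fintype_card] at this
  omega

namespace SimpleGraph

variable {V : Type*}

theorem crossingEdges_mono {G G' : SimpleGraph V} (h : G ≤ G') (S : Set V) :
    crossingEdges G S ⊆ crossingEdges G' S :=
  fun _ ⟨he, hcross⟩ => ⟨edgeSet_mono h he, hcross⟩

theorem cutCount_eq_of_crossingEdges_subset {G H : SimpleGraph V} (hle : H ≤ G) {S : Set V}
    (hsub : crossingEdges G S ⊆ H.edgeSet) : cutCount H S = cutCount G S := by
  unfold cutCount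
  rw [(crossingEdges_mono hle S).antisymm fun e he => ⟨hsub he, he.2⟩]

theorem not_reachable_of_crossingEdges_eq_empty {G : SimpleGraph V} {S : Set V}
    (h : crossingEdges G S = ∅) {x y : V} (hx : x ∈ S) (hy : y ∉ S) : ¬ G.Reachable x y := by
  rintro ⟨p⟩
  obtain ⟨d, -, hd₁, hd₂⟩ := p.exists_boundary_dart S hx hy
  exact (h ▸ ⟨d.adj, d.fst, hd₁, d.snd, hd₂, rfl⟩ : d.edge ∈ (∅ : Set (Sym2 V)))

theorem IsAcyclic.fromEdgeSet_union_singleton_of_crossingEdges_eq_empty {F : SimpleGraph V}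
    (hF : F.IsAcyclic) {S : Set V} (h : crossingEdges F S = ∅) {x y : V} (hx : x ∈ S)
    (hy : y ∉ S) : (fromEdgeSet (F.edgeSet ∪ {s(x, y)})).IsAcyclic := by
  rw [fromEdgeSet_union, fromEdgeSet_edgeSet]
  exact hF.sup_edge_of_not_reachable (not_reachable_of_crossingEdges_eq_empty h hx hy)

variable {ι : Type*} [Fintype ι] {G : SimpleGraph V} {T : ι → SimpleGraph V}

theorem card_le_cutCount_iSup_of_not_subset [Finite V]
    (hforest : ∀ i, (T i).IsAcyclic)
    (hdisj : ∀ i j, i ≠ j → Disjoint (T i).edgeSet (T j).edgeSet)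
    (hmaximal : ∀ i, ∀ e ∈ G.edgeSet, e ∉ (⋃ j, (T j).edgeSet) →
      ¬ (fromEdgeSet ((T i).edgeSet ∪ {e})).IsAcyclic)
    {S : Set V} (hS : ¬ crossingEdges G S ⊆ (⨆ i, T i).edgeSet) :
    Fintype.card ι ≤ cutCount (⨆ i, T i) S := by
  obtain ⟨_, ⟨he, x, hx, y, hy, rfl⟩, heH⟩ := Set.not_subset.1 hS
  rw [edgeSet_iSup] at heH
  by_contra! hlt
  obtain ⟨i, hi⟩ := exists_eq_empty_of_ncard_lt_card (Set.toFinite _)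
    (fun i j hij => Set.disjoint_of_subset (fun _ he => he.1) (fun _ he => he.1) (hdisj i j hij))
    (fun i => crossingEdges_mono (le_iSup T i) S) hlt
  exact hmaximal i _ he heH
    ((hforest i).fromEdgeSet_union_singleton_of_crossingEdges_eq_empty hi hx hy)

theorem crossingEdges_subset_iSup_of_cutCount_le [Finite V] (hle : ∀ i, T i ≤ G)
    (hforest : ∀ i, (T i).IsAcyclic)
    (hdisj : ∀ i j, i ≠ j → Disjoint (T i).edgeSet (T j).edgeSet)
    (hmaximal : ∀ i, ∀ e ∈ G.edgeSet, e ∉ (⋃ j, (T j).edgeSet) →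
      ¬ (fromEdgeSet ((T i).edgeSet ∪ {e})).IsAcyclic)
    {S : Set V} (hS : cutCount G S ≤ Fintype.card ι) :
    crossingEdges G S ⊆ (⨆ i, T i).edgeSet := by
  by_contra hS'
  have hk := card_le_cutCount_iSup_of_not_subset hforest hdisj hmaximal hS'
  obtain ⟨e, he, heH⟩ := Set.not_subset.1 hS'
  have hlt : cutCount (⨆ i, T i) S < cutCount G S :=
    Set.ncard_lt_ncard ((Set.ssubset_iff_of_subset (crossingEdges_mono (iSup_le hle) S)).2
      ⟨e, he, fun h => heH h.1⟩) (Set.toFinite _)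
  omega

end SimpleGraph

theorem stmt17_general {V : Type*} [Fintype V] (G : SimpleGraph V)
    (k : ℕ) (T : Fin k → SimpleGraph V)
    (hle : ∀ i, T i ≤ G)
    (hforest : ∀ i, (T i).IsAcyclic)
    (hdisj : ∀ i j, i ≠ j → Disjoint (T i).edgeSet (T j).edgeSet)
    (hmaximal : ∀ i, ∀ e ∈ G.edgeSet, e ∉ (⋃ j, (T j).edgeSet) →
      ¬ (SimpleGraph.fromEdgeSet ((T i).edgeSet ∪ {e})).IsAcyclic)
    (S₀ : Set V) (hS₀ne : S₀.Nonempty) (hS₀pr : S₀ ≠ Set.univ)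
    (hS₀min : ∀ S : Set V, S.Nonempty → S ≠ Set.univ → cutCount G S₀ ≤ cutCount G S)
    (hk : cutCount G S₀ ≤ k) :
    (∀ S : Set V, S.Nonempty → S ≠ Set.univ →
        cutCount G S₀ ≤ cutCount (⨆ i, T i) S) ∧
      cutCount (⨆ i, T i) S₀ = cutCount G S₀ ∧
      (∀ S : Set V, S.Nonempty → S ≠ Set.univ →
        (∀ S' : Set V, S'.Nonempty → S' ≠ Set.univ → cutCount G S ≤ cutCount G S') →
        crossingEdges G S ⊆ (⨆ i, T i).edgeSet) := by
  have hH : (⨆ i, T i) ≤ G := iSup_le hle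
  have hsub : ∀ S, cutCount G S ≤ k → crossingEdges G S ⊆ (⨆ i, T i).edgeSet := fun S hS =>
    SimpleGraph.crossingEdges_subset_iSup_of_cutCount_le hle hforest hdisj hmaximal
      (hS.trans_eq (Fintype.card_fin k).symm)
  refine ⟨fun S hne hpr => ?_, SimpleGraph.cutCount_eq_of_crossingEdges_subset hH (hsub S₀ hk),
    fun S _ _ hmin => hsub S ((hmin S₀ hS₀ne hS₀pr).trans hk)⟩
  by_cases hS : crossingEdges G S ⊆ (⨆ i, T i).edgeSet
  · rw [SimpleGraph.cutCount_eq_of_crossingEdges_subset hH hS]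
    exact hS₀min S hne hpr
  · have := SimpleGraph.card_le_cutCount_iSup_of_not_subset hforest hdisj hmaximal hS
    rw [Fintype.card_fin] at this
    exact hk.trans this

/-- Let `T₁,…,T_k` be a maximal `k`-packing of forests of a finite
connected simple graph `G` (pairwise edge-disjoint acyclic subgraphs such that adding
any unused edge of `G` to any `Tᵢ` creates a cycle), and suppose `k ≥ λ(G)`, witnessed
by a minimum cut `S₀` with `cutCount G S₀ ≤ k`. Then the subgraph `H = ⨆ i, Tᵢ`
satisfies `λ(H) = λ(G)`: every cut of `H` has at least `λ(G)` edges and the cut at `S₀`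
has exactly `λ(G)` edges in `H`; moreover every minimum cut of `G` has all its edges
in `H`. -/
theorem stmt17 {V : Type*} [Fintype V] (G : SimpleGraph V) (hG : G.Connected)
    (k : ℕ) (T : Fin k → SimpleGraph V)
    (hle : ∀ i, T i ≤ G)
    (hforest : ∀ i, (T i).IsAcyclic)
    (hdisj : ∀ i j, i ≠ j → Disjoint (T i).edgeSet (T j).edgeSet)
    (hmaximal : ∀ i, ∀ e ∈ G.edgeSet, e ∉ (⋃ j, (T j).edgeSet) →
      ¬ (SimpleGraph.fromEdgeSet ((T i).edgeSet ∪ {e})).IsAcyclic)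
    (S₀ : Set V) (hS₀ne : S₀.Nonempty) (hS₀pr : S₀ ≠ Set.univ)
    (hS₀min : ∀ S : Set V, S.Nonempty → S ≠ Set.univ → cutCount G S₀ ≤ cutCount G S)
    (hk : cutCount G S₀ ≤ k) :
    (∀ S : Set V, S.Nonempty → S ≠ Set.univ →
        cutCount G S₀ ≤ cutCount (⨆ i, T i) S) ∧
      cutCount (⨆ i, T i) S₀ = cutCount G S₀ ∧
      (∀ S : Set V, S.Nonempty → S ≠ Set.univ →
        (∀ S' : Set V, S'.Nonempty → S' ≠ Set.univ → cutCount G S ≤ cutCount G S') →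
        crossingEdges G S ⊆ (⨆ i, T i).edgeSet) :=
  stmt17_general G k T hle hforest hdisj hmaximal S₀ hS₀ne hS₀pr hS₀min hk
end
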